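/- On 𝔗_b, the modified uncentred triangular maximal operator 𝒰' is unbounded on L^p for every p ≤ 2: for a point o and descendants x of o at even distance |x|, one has 𝒰'δ_o(x) ≥ 1/(2b^{|x|/2} + 1), and ∑_{j≥0} b^{2j}(2b^j + 1)^{−p} diverges for p ≤ 2. -/

import Mathlib

open scoped ENNReal NNReal
open Set

/-- A locally finite tree presented via the data induced by a fixed geodesic ray `ω`:
a predecessor map `pred`, a height (Busemann) function `ht` increasing by one along `pred`,
finite successor sets, and connectedness (any two vertices have a common ancestor). -/
structure TreeData (V : Type*) where
  pred : V → V
  ht : V → ℤ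
  ht_pred : ∀ x, ht (pred x) = ht x + 1
  fiber_finite : ∀ x, {y | pred y = x}.Finite
  connected : ∀ x y, ∃ k l : ℕ, pred^[k] x = pred^[l] y

namespace TreeData

variable {V : Type*}

/-- The set of successors of a vertex. -/
def succs (t : TreeData V) (x : V) : Set V := {y | t.pred y = x}

/-- Every vertex has at least 3 neighbours, i.e. at least 2 successors. -/
def Thick (t : TreeData V) : Prop := ∀ x, 2 ≤ (t.succs x).ncard

/-- Homogeneous tree `𝔗_b`: every vertex has exactly `b+1` neighbours, i.e. `b` successors. -/
def Homog (t : TreeData V) (b : ℕ) : Prop := ∀ x, (t.succs x).ncard = b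

/-- The triangle with vertex `x` and height `R`: all descendants of `x` within `R` generations. -/
def tri (t : TreeData V) (x : V) (R : ℕ) : Set V := {y | ∃ j ≤ R, t.pred^[j] y = x}

/-- The base of the triangle with vertex `x` and height `R`: the `R`-fold successors of `x`. -/
def base (t : TreeData V) (x : V) (R : ℕ) : Set V := {y | t.pred^[R] y = x}

/-- The graph distance on the tree. -/
noncomputable def dist (t : TreeData V) (x y : V) : ℕ :=
  sInf {n | ∃ k l : ℕ, k + l = n ∧ t.pred^[k] x = t.pred^[l] y}

/-- Number of points of a set, as an element of `ℝ≥0∞` (counting measure). -/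
noncomputable def esize (E : Set V) : ℝ≥0∞ := ∑' _ : E, (1 : ℝ≥0∞)

/-- The average of `|f|` over a set, with respect to counting measure. -/
noncomputable def setAvg (t : TreeData V) (S : Set V) (f : V → ℝ) : ℝ≥0∞ :=
  (∑' y : S, (‖f y‖₊ : ℝ≥0∞)) / (S.ncard : ℝ≥0∞)

/-- The centred triangular maximal operator `𝒯`. -/
noncomputable def cmax (t : TreeData V) (f : V → ℝ) (x : V) : ℝ≥0∞ :=
  ⨆ R : ℕ, t.setAvg (t.tri x R) f

/-- The uncentred triangular maximal operator `𝒰`. -/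
noncomputable def umax (t : TreeData V) (f : V → ℝ) (x : V) : ℝ≥0∞ :=
  ⨆ (v : V) (R : ℕ) (_ : x ∈ t.tri v R), t.setAvg (t.tri v R) f

/-- The uncentred base maximal operator `ℬᵘ`. -/
noncomputable def ubmax (t : TreeData V) (f : V → ℝ) (x : V) : ℝ≥0∞ :=
  ⨆ (v : V) (R : ℕ) (_ : x ∈ t.tri v R), t.setAvg (t.base v R) f

/-- The modified triangle `T'_r(x) = T_r(x) ∪ {p^r(x)}`. -/
def mtri (t : TreeData V) (x : V) (r : ℕ) : Set V := t.tri x r ∪ {t.pred^[r] x}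

/-- The modified centred triangular maximal operator `𝒯'`. -/
noncomputable def cmax' (t : TreeData V) (f : V → ℝ) (x : V) : ℝ≥0∞ :=
  ⨆ r : ℕ, t.setAvg (t.mtri x r) f

/-- The modified uncentred triangular maximal operator `𝒰'`. -/
noncomputable def umax' (t : TreeData V) (f : V → ℝ) (x : V) : ℝ≥0∞ :=
  ⨆ (v : V) (r : ℕ) (_ : x ∈ t.mtri v r), t.setAvg (t.mtri v r) f

/-- The `ℓ^p` norm with respect to counting measure, for `p ∈ [1,∞]`. -/
noncomputable def eLp (p : ℝ≥0∞) (g : V → ℝ≥0∞) : ℝ≥0∞ :=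
  if p = ∞ then ⨆ v, g v else (∑' v, g v ^ p.toReal) ^ (1 / p.toReal)

/-- `|f|` as an `ℝ≥0∞`-valued function. -/
noncomputable def nn (f : V → ℝ) (x : V) : ℝ≥0∞ := (‖f x‖₊ : ℝ≥0∞)

/-- The point mass at `o`. -/
noncomputable def delta (o : V) : V → ℝ := ({o} : Set V).indicator fun _ => 1

end TreeData

/-! The modified triangle `T'_m(p^m x)` has at most `2b^m + 1` points and contains both `x`
and `o = p^{2m} x`, so `𝒰'δ_o(x) ≥ (2b^m + 1)⁻¹`. The `b^{2m}` points `x` with `p^{2m} x = o` are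
distinct for distinct `m` (they lie on different horocycles), hence
`‖𝒰'δ_o‖_p^p ≥ ∑_m b^{2m}(2b^m + 1)^{-p}`, whose terms are at least `1/9` when `p ≤ 2`,
while `‖δ_o‖_p = 1`. -/

open Function

lemma ENNReal.inv_nine_le_sq_mul_inv_rpow {B : ℝ≥0∞} (hB : 1 ≤ B) (hB' : B ≠ ∞) {p : ℝ}
    (hp : p ≤ 2) : (9 : ℝ≥0∞)⁻¹ ≤ B ^ 2 * ((2 * B + 1) ^ p)⁻¹ := by
  have hle : (2 * B + 1) ^ p ≤ 9 * B ^ 2 :=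
    calc (2 * B + 1) ^ p ≤ (2 * B + 1) ^ (2 : ℝ) :=
          ENNReal.rpow_le_rpow_of_exponent_le le_add_self hp
      _ = (2 * B + 1) ^ 2 := ENNReal.rpow_two _
      _ ≤ (3 * B) ^ 2 := by
          gcongr
          calc 2 * B + 1 ≤ 2 * B + B := by gcongr
            _ = 3 * B := by ring
      _ = 9 * B ^ 2 := by ring
  have hB0 : B ^ 2 ≠ 0 := pow_ne_zero _ (one_pos.trans_le hB).ne'
  calc (9 : ℝ≥0∞)⁻¹ = B ^ 2 * (9 * B ^ 2)⁻¹ := by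
        rw [ENNReal.mul_inv (by norm_num) (by norm_num), mul_left_comm,
          ENNReal.mul_inv_cancel hB0 (pow_ne_top hB'), mul_one]
    _ ≤ B ^ 2 * ((2 * B + 1) ^ p)⁻¹ := by gcongr

lemma ENNReal.tsum_pow_mul_inv_rpow_eq_top {b : ℕ} (hb : 1 ≤ b) {p : ℝ} (hp : p ≤ 2) :
    ∑' j : ℕ, (b : ℝ≥0∞) ^ (2 * j) * ((2 * (b : ℝ≥0∞) ^ j + 1) ^ p)⁻¹ = ∞ := by
  refine top_le_iff.mp ?_
  calc ∞ = ∑' _ : ℕ, (9 : ℝ≥0∞)⁻¹ := (ENNReal.tsum_const_eq_top_of_ne_zero (by norm_num)).symm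
    _ ≤ _ := ENNReal.tsum_le_tsum fun j => by
      rw [pow_mul']
      exact ENNReal.inv_nine_le_sq_mul_inv_rpow (one_le_pow₀ (by exact_mod_cast hb))
        (ENNReal.pow_ne_top (ENNReal.natCast_ne_top b)) hp

lemma ENNReal.tsum_tsum_subtype_le_tsum {α ι : Type*} {s : ι → Set α}
    (hs : Pairwise (Disjoint on s)) (f : α → ℝ≥0∞) :
    ∑' i, ∑' x : s i, f x ≤ ∑' x, f x := by
  calc ∑' i, ∑' x : s i, f x = ∑' x : Σ i, s i, f x.2 :=
        (ENNReal.tsum_sigma' (fun x : Σ i, s i => f x.2)).symm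
    _ ≤ ∑' x, f x := ENNReal.tsum_comp_le_tsum_of_injective ?_ f
  rintro ⟨i, x, hx⟩ ⟨j, y, hy⟩ (rfl : x = y)
  obtain rfl : i = j := by_contra fun hij => Set.disjoint_left.mp (hs hij) hx hy
  rfl

namespace TreeData

variable {V : Type*}

section Combinatorics

variable (t : TreeData V)

lemma ht_iterate_pred (k : ℕ) (x : V) : t.ht (t.pred^[k] x) = t.ht x + k := by
  induction k generalizing x with
  | zero => simp
  | succ k ih =>
    rw [Function.iterate_succ_apply', t.ht_pred, ih]
    push_cast
    ring

lemma pairwise_disjoint_base (x : V) : Pairwise (Disjoint on t.base x) := by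
  intro i j hij
  refine Set.disjoint_left.mpr fun y (hi : t.pred^[i] y = x) (hj : t.pred^[j] y = x) => hij ?_
  have hti := t.ht_iterate_pred i y
  have htj := t.ht_iterate_pred j y
  rw [hi] at hti
  rw [hj] at htj
  omega

lemma base_zero (x : V) : t.base x 0 = {x} := by
  ext y
  simp [base]

lemma base_succ (x : V) (R : ℕ) : t.base x (R + 1) = t.pred ⁻¹' t.base x R := by
  ext y
  simp [base, Function.iterate_succ_apply]

lemma tri_zero (x : V) : t.tri x 0 = {x} := by
  ext y
  simp [tri]

lemma tri_succ (x : V) (R : ℕ) : t.tri x (R + 1) = t.tri x R ∪ t.base x (R + 1) := by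
  ext y
  simp only [tri, base, Set.mem_union, Set.mem_ofPred_eq]
  constructor
  · rintro ⟨j, hj, h⟩
    rcases Nat.lt_or_ge j (R + 1) with hlt | hge
    · exact Or.inl ⟨j, Nat.lt_succ_iff.mp hlt, h⟩
    · exact Or.inr (le_antisymm hj hge ▸ h)
  · rintro (⟨j, hj, h⟩ | h)
    · exact ⟨j, Nat.le_succ_of_le hj, h⟩
    · exact ⟨R + 1, le_rfl, h⟩

end Combinatorics

lemma setAvg_delta_of_mem (t : TreeData V) {o : V} {S : Set V} (ho : o ∈ S) :
    t.setAvg S (delta o) = (S.ncard : ℝ≥0∞)⁻¹ := by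
  rw [setAvg, tsum_eq_single (⟨o, ho⟩ : S), ENNReal.div_eq_inv_mul]
  · simp [delta]
  · intro y hy
    have hyo : (y : V) ≠ o := fun h => hy (Subtype.ext h)
    simp [delta, hyo]

lemma eLp_nn_delta {p : ℝ≥0∞} (hp : p ≠ 0) (o : V) : eLp p (nn (delta o)) = 1 := by
  have hnn : nn (delta o) = ({o} : Set V).indicator 1 := by
    ext v
    by_cases hv : v = o <;> simp [nn, delta, hv]
  rw [eLp, hnn]
  split_ifs with hp'
  · exact le_antisymm (iSup_le fun v => Set.indicator_le_self _ _ v)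
      (le_iSup_of_le o (by simp))
  · have hpos : 0 < p.toReal := ENNReal.toReal_pos hp hp'
    rw [tsum_eq_single o fun v hv => by simp [hv, ENNReal.zero_rpow_of_pos hpos]]
    simp

lemma eLp_eq_top {p : ℝ≥0∞} (hp : p ≠ 0) (hp' : p ≠ ∞) {g : V → ℝ≥0∞}
    (hg : ∑' v, g v ^ p.toReal = ∞) : eLp p g = ∞ := by
  rw [eLp, if_neg hp', hg]
  exact ENNReal.top_rpow_of_pos (by simpa using ENNReal.toReal_pos hp hp')

namespace Homog

variable {t : TreeData V} {b : ℕ}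

lemma finite_preimage_and_ncard (hhom : t.Homog b) {S : Set V} (hS : S.Finite) :
    (t.pred ⁻¹' S).Finite ∧ (t.pred ⁻¹' S).ncard = b * S.ncard := by
  induction S, hS using Set.Finite.induction_on with
  | empty => simp
  | @insert a s ha hs ih =>
    have hpre : t.pred ⁻¹' insert a s = t.succs a ∪ t.pred ⁻¹' s := by
      ext y
      simp [succs]
    have hdisj : Disjoint (t.succs a) (t.pred ⁻¹' s) :=
      Set.disjoint_left.mpr fun y (hy : t.pred y = a) (hys : t.pred y ∈ s) => ha (hy ▸ hys)
    rw [hpre, Set.ncard_union_eq hdisj (t.fiber_finite a) ih.1, ih.2, hhom a,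
      Set.ncard_insert_of_notMem ha hs]
    exact ⟨(t.fiber_finite a).union ih.1, by ring⟩

lemma finite_base_and_ncard (hhom : t.Homog b) (x : V) (R : ℕ) :
    (t.base x R).Finite ∧ (t.base x R).ncard = b ^ R := by
  induction R with
  | zero => simp [base_zero]
  | succ R ih =>
    obtain ⟨hfin, hcard⟩ := hhom.finite_preimage_and_ncard ih.1
    rw [base_succ, pow_succ, mul_comm, ← ih.2]
    exact ⟨hfin, hcard⟩

lemma encard_base (hhom : t.Homog b) (x : V) (R : ℕ) :
    (t.base x R).encard = b ^ R := by
  obtain ⟨hfin, hcard⟩ := hhom.finite_base_and_ncard x R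
  rw [← hfin.cast_ncard_eq, hcard]
  push_cast
  rfl

lemma finite_tri_and_ncard_le (hhom : t.Homog b) (hb : 2 ≤ b) (x : V) (R : ℕ) :
    (t.tri x R).Finite ∧ (t.tri x R).ncard ≤ 2 * b ^ R := by
  induction R with
  | zero => simp [tri_zero]
  | succ R ih =>
    obtain ⟨hfin, hcard⟩ := hhom.finite_base_and_ncard x (R + 1)
    rw [tri_succ]
    refine ⟨ih.1.union hfin, (Set.ncard_union_le _ _).trans ?_⟩
    have : 2 * b ^ R ≤ b ^ (R + 1) := pow_succ' b R ▸ Nat.mul_le_mul_right _ hb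
    omega

lemma ncard_mtri_le (hhom : t.Homog b) (hb : 2 ≤ b) (x : V) (r : ℕ) :
    (t.mtri x r).ncard ≤ 2 * b ^ r + 1 :=
  (Set.ncard_union_le _ _).trans <| by
    simpa using (hhom.finite_tri_and_ncard_le hb x r).2

lemma inv_le_umax'_delta (hhom : t.Homog b) (hb : 2 ≤ b)
    {o x : V} {m : ℕ} (hx : t.pred^[2 * m] x = o) :
    (2 * (b : ℝ≥0∞) ^ m + 1)⁻¹ ≤ t.umax' (delta o) x := by
  set v := t.pred^[m] x
  have hxv : x ∈ t.mtri v m := Or.inl ⟨m, le_rfl, rfl⟩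
  have hov : o ∈ t.mtri v m := by
    refine Or.inr ?_
    rw [← hx, two_mul, Function.iterate_add_apply]
    rfl
  have hcard : ((t.mtri v m).ncard : ℝ≥0∞) ≤ 2 * (b : ℝ≥0∞) ^ m + 1 := by
    exact_mod_cast hhom.ncard_mtri_le hb v m
  calc (2 * (b : ℝ≥0∞) ^ m + 1)⁻¹ ≤ t.setAvg (t.mtri v m) (delta o) := by
        rw [t.setAvg_delta_of_mem hov]
        exact ENNReal.inv_le_inv.mpr hcard
    _ ≤ t.umax' (delta o) x := le_iSup₂_of_le v m (le_iSup_of_le hxv le_rfl)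

lemma tsum_umax'_delta_rpow_eq_top (hhom : t.Homog b)
    (hb : 2 ≤ b) (o : V) {p : ℝ} (hp0 : 0 ≤ p) (hp : p ≤ 2) :
    ∑' v, t.umax' (delta o) v ^ p = ∞ := by
  refine top_le_iff.mp ?_
  calc ∞ = ∑' j : ℕ, (b : ℝ≥0∞) ^ (2 * j) * ((2 * (b : ℝ≥0∞) ^ j + 1) ^ p)⁻¹ :=
        (ENNReal.tsum_pow_mul_inv_rpow_eq_top (by omega) hp).symm
    _ = ∑' j : ℕ, ∑' _ : t.base o (2 * j), ((2 * (b : ℝ≥0∞) ^ j + 1) ^ p)⁻¹ := by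
        simp_rw [ENNReal.tsum_set_const, hhom.encard_base]
        push_cast
        rfl
    _ ≤ ∑' j : ℕ, ∑' v : t.base o (2 * j), t.umax' (delta o) v ^ p :=
        ENNReal.tsum_le_tsum fun j => ENNReal.tsum_le_tsum fun v => by
          rw [← ENNReal.inv_rpow]
          exact ENNReal.rpow_le_rpow (hhom.inv_le_umax'_delta hb v.2) hp0
    _ ≤ ∑' v, t.umax' (delta o) v ^ p :=
        ENNReal.tsum_tsum_subtype_le_tsum
          ((t.pairwise_disjoint_base o).comp_of_injective (mul_right_injective₀ two_ne_zero)) _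

end Homog

end TreeData

/-- On `𝔗_b`, the modified uncentred maximal operator `𝒰'` satisfies
`𝒰'δ_o(x) ≥ 1/(2b^{|x|/2}+1)` for descendants `x` of `o` at even distance `|x| = 2m`,
`∑_j b^{2j}(2b^j+1)^{-p}` diverges for `p ≤ 2`, and `𝒰'` is unbounded on `L^p` for every
`p ∈ [1,2]`. -/
theorem stmt18 {V : Type*} (t : TreeData V) (b : ℕ) (hb : 2 ≤ b) (hhom : t.Homog b)
    (o : V) :
    (∀ (x : V) (m : ℕ), t.pred^[2 * m] x = o →
        ((2 * (b : ℝ≥0∞) ^ m + 1))⁻¹ ≤ t.umax' (TreeData.delta o) x) ∧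
      (∀ p : ℝ, p ≤ 2 →
        ∑' j : ℕ, (b : ℝ≥0∞) ^ (2 * j) * ((2 * (b : ℝ≥0∞) ^ j + 1) ^ p)⁻¹ = ∞) ∧
      ∀ p : ℝ, 1 ≤ p → p ≤ 2 →
        ¬ ∃ C : ℝ≥0∞, C < ∞ ∧
            ∀ f : V → ℝ, TreeData.eLp (ENNReal.ofReal p) (t.umax' f) ≤
              C * TreeData.eLp (ENNReal.ofReal p) (TreeData.nn f) := by
  refine ⟨fun x m hx => hhom.inv_le_umax'_delta hb hx,
    fun p hp => ENNReal.tsum_pow_mul_inv_rpow_eq_top (by omega) hp, ?_⟩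
  rintro p hp1 hp2 ⟨C, hC, hbound⟩
  have hp0 : ENNReal.ofReal p ≠ 0 := by simpa using zero_lt_one.trans_le hp1
  have hunbounded : TreeData.eLp (ENNReal.ofReal p) (t.umax' (TreeData.delta o)) = ∞ := by
    refine TreeData.eLp_eq_top hp0 ENNReal.ofReal_ne_top ?_
    rw [ENNReal.toReal_ofReal (by linarith)]
    exact hhom.tsum_umax'_delta_rpow_eq_top hb o (by linarith) hp2
  have h := hbound (TreeData.delta o)
  rw [hunbounded, TreeData.eLp_nn_delta hp0, mul_one] at h
  exact hC.ne (top_le_iff.mp h)
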